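/- arXiv:2404.11222 — 7 statements merged into one kernel-verified Lean document; each statement's English description precedes it below -/
import Mathlib

section
/- Let d ≥ 2. The set S := { M_x = (1 − x)·I + C_x : x ∈ ℝ^d, x_i ≥ 0 for all i, and 1 + x_i ≥ x for all i, where x = x_1 + ⋯ + x_d } of equal-input Markov matrices is a closed convex subset of the d×d real matrices, and its set of extreme points consists of exactly the d + 2 matrices C_{e_1}, …, C_{e_d}, the identity I, and (1/(d−1))·(C_𝟙 − I), where e_i is the i-th standard unit row vector and 𝟙 = (1,…,1). -/
open Matrix

/-- `eqRows d x` is the `d × d` real matrix all of whose rows equal the row vector `x`. -/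
def eqRows (d : ℕ) (x : Fin d → ℝ) : Matrix (Fin d) (Fin d) ℝ :=
  Matrix.of fun _ j => x j

/-- The set of equal-input Markov matrices `M_x = (1 − x)·I + C_x` with `xᵢ ≥ 0`
and `1 + xᵢ ≥ x` for all `i`, where `x = ∑ⱼ xⱼ`. -/
def eqInputMarkov (d : ℕ) : Set (Matrix (Fin d) (Fin d) ℝ) :=
  {M | ∃ x : Fin d → ℝ, (∀ i, 0 ≤ x i) ∧ (∀ i, ∑ j, x j ≤ 1 + x i) ∧
    M = (1 - ∑ j, x j) • (1 : Matrix (Fin d) (Fin d) ℝ) + eqRows d x}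

/-!
For `d ≥ 2` the map `x ↦ M_x` is affine and injective, so the set of equal-input Markov matrices
is the affine image of the polytope `P = {x | 0 ≤ xᵢ, ∑ⱼ xⱼ ≤ 1 + xᵢ}` and its extreme points are
the images of those of `P`. The polytope `P` is the convex hull of `0`, the `eᵢ` and
`v = (d - 1)⁻¹ • 𝟙`: with `c = max (∑ⱼ xⱼ - 1) 0` one has `x = c (d - 1) • v + ∑ᵢ (xᵢ - c) • eᵢ`,
the remaining weight `1 - ∑ⱼ xⱼ + c` going to `0`. So the matrix set is the convex hull of finitely
many points, hence closed and convex, with extreme points among them; conversely `0`, `v` and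
`eᵢ` are the unique maximisers on `P` of `-∑ⱼ xⱼ`, `∑ⱼ xⱼ` and `xᵢ - ∑_{j ≠ i} xⱼ` respectively.
-/

open Function Set

section Convexity

variable {𝕜 E F : Type*}

theorem AffineMap.image_extremePoints_subset [Ring 𝕜] [PartialOrder 𝕜] [IsOrderedRing 𝕜]
    [AddCommGroup E] [Module 𝕜 E] [AddCommGroup F] [Module 𝕜 F]
    {f : E →ᵃ[𝕜] F} (hf : Injective f) (A : Set E) :
    f '' A.extremePoints 𝕜 ⊆ (f '' A).extremePoints 𝕜 := by
  rintro _ ⟨x, ⟨hxA, hx⟩, rfl⟩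
  refine ⟨mem_image_of_mem f hxA, ?_⟩
  rintro _ ⟨y, hy, rfl⟩ _ ⟨z, hz, rfl⟩ hseg
  rw [← image_openSegment] at hseg
  obtain ⟨w, hw, hwx⟩ := hseg
  rw [hf hwx] at hw
  exact congrArg f (hx hy hz hw)

variable [AddCommGroup E] [Module ℝ E]

theorem mem_extremePoints_of_isMaxOn_unique {A : Set E} {x : E} (f : E →ₗ[ℝ] ℝ) (hx : x ∈ A)
    (hle : ∀ y ∈ A, f y ≤ f x) (heq : ∀ y ∈ A, f y = f x → y = x) :
    x ∈ A.extremePoints ℝ := by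
  refine ⟨hx, fun y hy z hz ⟨a, b, ha, hb, hab, hxyz⟩ => heq y hy ?_⟩
  have hfx : a * f y + b * f z = f x := by rw [← hxyz]; simp
  have hgap : a * (f x - f y) + b * (f x - f z) = 0 := by linear_combination f x * hab - hfx
  refine le_antisymm (hle y hy) (by_contra fun hlt => ?_)
  linarith [mul_pos ha (sub_pos.2 (not_le.1 hlt)), mul_nonneg hb.le (sub_nonneg.2 (hle z hz))]

theorem Convex.sum_smul_mem_of_zero_mem {ι : Type*} [Fintype ι] {s : Set E} (hs : Convex ℝ s)
    (h0 : 0 ∈ s) {w : ι → ℝ} {z : ι → E} (hw₀ : ∀ i, 0 ≤ w i) (hw₁ : ∑ i, w i ≤ 1)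
    (hz : ∀ i, z i ∈ s) : ∑ i, w i • z i ∈ s := by
  have := hs.sum_mem (t := Finset.univ) (w := fun o => o.elim (1 - ∑ i, w i) w)
    (z := fun o : Option ι => o.elim 0 z) ?_ ?_ ?_
  · simpa [Fintype.sum_option] using this
  · rintro (_ | i) -
    exacts [sub_nonneg.2 hw₁, hw₀ i]
  · simp [Fintype.sum_option]
  · rintro (_ | i) -
    exacts [h0, hz i]

end Convexity

variable {d : ℕ}

def eqInputParams (d : ℕ) : Set (Fin d → ℝ) :=
  {x | (∀ i, 0 ≤ x i) ∧ ∀ i, ∑ j, x j ≤ 1 + x i}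

noncomputable def eqInputLinear (d : ℕ) : (Fin d → ℝ) →ₗ[ℝ] Matrix (Fin d) (Fin d) ℝ where
  toFun x := eqRows d x - (∑ j, x j) • 1
  map_add' x y := by
    ext
    simp only [eqRows, Matrix.add_apply, Matrix.sub_apply, Matrix.smul_apply, of_apply,
      Pi.add_apply, Finset.sum_add_distrib, smul_eq_mul]
    ring
  map_smul' c x := by
    ext
    simp only [eqRows, Matrix.smul_apply, Matrix.sub_apply, of_apply, Pi.smul_apply, smul_eq_mul,
      ← Finset.mul_sum, RingHom.id_apply]
    ring

noncomputable def eqInputAffine (d : ℕ) : (Fin d → ℝ) →ᵃ[ℝ] Matrix (Fin d) (Fin d) ℝ :=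
  (eqInputLinear d).toAffineMap + AffineMap.const ℝ _ 1

theorem eqInputAffine_apply (x : Fin d → ℝ) :
    eqInputAffine d x = (1 - ∑ j, x j) • 1 + eqRows d x := by
  simp only [eqInputAffine, AffineMap.coe_add, Pi.add_apply, LinearMap.coe_toAffineMap,
    AffineMap.const_apply]
  simp only [eqInputLinear, LinearMap.coe_mk, AddHom.coe_mk]
  module

theorem eqInputMarkov_eq_image : eqInputMarkov d = eqInputAffine d '' eqInputParams d := by
  ext M
  simp only [eqInputMarkov, eqInputParams, mem_image, eqInputAffine_apply, mem_ofPred_eq]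
  grind

theorem eqInputAffine_injective (hd : 2 ≤ d) : Injective (eqInputAffine d) := by
  intro x y h
  funext j
  obtain ⟨i, hij⟩ := Fintype.exists_ne_of_one_lt_card (by simp; omega) j
  simpa [eqInputAffine_apply, eqRows, hij] using congrFun (congrFun h i) j

theorem convex_eqInputParams : Convex ℝ (eqInputParams d) := by
  rintro x ⟨hx₀, hx₁⟩ y ⟨hy₀, hy₁⟩ a b ha hb hab
  refine ⟨fun i => ?_, fun i => ?_⟩
  · simp only [Pi.add_apply, Pi.smul_apply, smul_eq_mul]
    exact add_nonneg (mul_nonneg ha (hx₀ i)) (mul_nonneg hb (hy₀ i))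
  · simp only [Pi.add_apply, Pi.smul_apply, smul_eq_mul, Finset.sum_add_distrib, ← Finset.mul_sum]
    nlinarith [mul_le_mul_of_nonneg_left (hx₁ i) ha, mul_le_mul_of_nonneg_left (hy₁ i) hb]

def eqInputParamVertices (d : ℕ) : Set (Fin d → ℝ) :=
  (range fun i => Pi.single i 1) ∪ {0, fun _ => ((d : ℝ) - 1)⁻¹}

theorem natCast_sub_one_pos (hd : 2 ≤ d) : (0 : ℝ) < d - 1 := by
  have : (2 : ℝ) ≤ d := by exact_mod_cast hd
  linarith

theorem single_mem_eqInputParams (i : Fin d) : Pi.single i 1 ∈ eqInputParams d := by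
  refine ⟨fun j => ?_, fun j => ?_⟩
  · rw [Pi.single_apply]; split_ifs <;> norm_num
  · rw [Finset.sum_pi_single', if_pos (Finset.mem_univ i), Pi.single_apply]
    split_ifs <;> norm_num

theorem const_inv_mem_eqInputParams (hd : 2 ≤ d) :
    (fun _ => ((d : ℝ) - 1)⁻¹) ∈ eqInputParams d := by
  have hd' := (natCast_sub_one_pos hd).ne'
  refine ⟨fun _ => inv_nonneg.2 (natCast_sub_one_pos hd).le, fun _ => le_of_eq ?_⟩
  simp only [Finset.sum_const, Finset.card_univ, Fintype.card_fin, nsmul_eq_mul]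
  field_simp
  ring

theorem eqInputParamVertices_subset (hd : 2 ≤ d) : eqInputParamVertices d ⊆ eqInputParams d := by
  rintro _ (⟨i, rfl⟩ | rfl | rfl)
  · exact single_mem_eqInputParams i
  · exact ⟨fun _ => le_rfl, fun _ => by simp⟩
  · exact const_inv_mem_eqInputParams hd

theorem eqInputParams_subset_convexHull (hd : 2 ≤ d) :
    eqInputParams d ⊆ convexHull ℝ (eqInputParamVertices d) := by
  rintro x ⟨hx₀, hx₁⟩
  have hd' := (natCast_sub_one_pos hd).ne'
  set c := max (∑ j, x j - 1) 0
  have hcx : ∀ i, c ≤ x i := fun i => max_le (by linarith [hx₁ i]) (hx₀ i)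
  have hsum := (convex_convexHull ℝ (eqInputParamVertices d)).sum_smul_mem_of_zero_mem
    (subset_convexHull ℝ _ (by simp [eqInputParamVertices]))
    (w := fun o : Option (Fin d) => o.elim (c * ((d : ℝ) - 1)) fun i => x i - c)
    (z := fun o : Option (Fin d) => o.elim (fun _ => ((d : ℝ) - 1)⁻¹) fun i => Pi.single i 1)
    ?_ ?_ ?_
  · convert hsum using 1
    funext j
    simp only [Finset.sum_apply, Pi.smul_apply, smul_eq_mul, Fintype.sum_option, Option.elim_none,
      Option.elim_some, Pi.single_apply, mul_ite, mul_one, mul_zero, Finset.sum_ite_eq,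
      Finset.mem_univ, if_true]
    field_simp
    ring
  · rintro (_ | i)
    exacts [mul_nonneg (le_max_right _ _) (natCast_sub_one_pos hd).le, sub_nonneg.2 (hcx i)]
  · simp only [Fintype.sum_option, Option.elim, Finset.sum_sub_distrib, Finset.sum_const,
      Finset.card_univ, Fintype.card_fin, nsmul_eq_mul]
    linarith [le_max_left (∑ j, x j - 1) 0]
  · rintro (_ | i) <;> apply subset_convexHull
    · simp [eqInputParamVertices]
    · exact Or.inl ⟨i, rfl⟩

theorem eqInputParams_eq_convexHull (hd : 2 ≤ d) :
    eqInputParams d = convexHull ℝ (eqInputParamVertices d) :=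
  (eqInputParams_subset_convexHull hd).antisymm
    (convexHull_min (eqInputParamVertices_subset hd) convex_eqInputParams)

theorem sub_one_mul_sum_le {x : Fin d → ℝ} (hx : x ∈ eqInputParams d) :
    ((d : ℝ) - 1) * ∑ j, x j ≤ d := by
  have h := Finset.sum_le_sum fun i (_ : i ∈ Finset.univ) => hx.2 i
  simp only [Finset.sum_const, Finset.card_univ, Fintype.card_fin, nsmul_eq_mul,
    Finset.sum_add_distrib, mul_one] at h
  linarith

theorem eq_const_inv_of_sub_one_mul_sum_eq (hd : 2 ≤ d) {x : Fin d → ℝ}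
    (hx : x ∈ eqInputParams d) (hsum : ((d : ℝ) - 1) * ∑ j, x j = d) :
    x = fun _ => ((d : ℝ) - 1)⁻¹ := by
  have hd' := (natCast_sub_one_pos hd).ne'
  have hslack : ∑ i, (1 + x i - ∑ j, x j) = 0 := by
    simp only [Finset.sum_sub_distrib, Finset.sum_add_distrib, Finset.sum_const,
      Finset.card_univ, Fintype.card_fin, nsmul_eq_mul, mul_one]
    linarith
  have htight := (Finset.sum_eq_zero_iff_of_nonneg fun i _ => by linarith [hx.2 i]).1 hslack
  funext i
  have hi := htight i (Finset.mem_univ i)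
  field_simp
  linear_combination (d - 1 : ℝ) * hi + hsum

theorem zero_mem_extremePoints_eqInputParams : 0 ∈ (eqInputParams d).extremePoints ℝ := by
  refine mem_extremePoints_of_isMaxOn_unique (-∑ j, LinearMap.proj j)
    ⟨fun _ => le_rfl, fun _ => by simp⟩ (fun y hy => ?_) (fun y hy h => ?_)
  · simpa using Finset.sum_nonneg fun j _ => hy.1 j
  · funext j
    simp only [LinearMap.neg_apply, LinearMap.coe_sum, Finset.sum_apply, LinearMap.coe_proj,
      Function.eval, map_zero, neg_eq_zero] at h
    exact (Finset.sum_eq_zero_iff_of_nonneg fun j _ => hy.1 j).1 h j (Finset.mem_univ j)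

theorem const_inv_mem_extremePoints_eqInputParams (hd : 2 ≤ d) :
    (fun _ => ((d : ℝ) - 1)⁻¹) ∈ (eqInputParams d).extremePoints ℝ := by
  have hsum : ((d : ℝ) - 1) * ∑ _j : Fin d, ((d : ℝ) - 1)⁻¹ = d := by
    rw [Finset.sum_const, Finset.card_univ, Fintype.card_fin, nsmul_eq_mul, mul_left_comm,
      mul_inv_cancel₀ (natCast_sub_one_pos hd).ne', mul_one]
  refine mem_extremePoints_of_isMaxOn_unique (∑ j, LinearMap.proj j)
    (const_inv_mem_eqInputParams hd) (fun y hy => ?_) (fun y hy h => ?_)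
  · simp only [LinearMap.coe_sum, Finset.sum_apply, LinearMap.coe_proj, Function.eval]
    exact le_of_mul_le_mul_left ((sub_one_mul_sum_le hy).trans hsum.ge) (natCast_sub_one_pos hd)
  · simp only [LinearMap.coe_sum, Finset.sum_apply, LinearMap.coe_proj, Function.eval] at h
    exact eq_const_inv_of_sub_one_mul_sum_eq hd hy (h ▸ hsum)

theorem single_mem_extremePoints_eqInputParams (hd : 2 ≤ d) (i : Fin d) :
    Pi.single i 1 ∈ (eqInputParams d).extremePoints ℝ := by
  obtain ⟨k, hki⟩ := Fintype.exists_ne_of_one_lt_card (by simp; omega) i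
  have hrest_nonneg : ∀ y ∈ eqInputParams d, 0 ≤ ∑ j ∈ Finset.univ.erase i, y j :=
    fun y hy => Finset.sum_nonneg fun j _ => hy.1 j
  have hle_one : ∀ y ∈ eqInputParams d, y i ≤ 1 := fun y hy => by
    have := Finset.add_le_sum (fun j _ => hy.1 j) (Finset.mem_univ i) (Finset.mem_univ k) hki.symm
    linarith [hy.2 k]
  let π : Fin d → (Fin d → ℝ) →ₗ[ℝ] ℝ := LinearMap.proj
  let f := π i - ∑ j ∈ Finset.univ.erase i, π j
  have hf : ∀ y, f y = y i - ∑ j ∈ Finset.univ.erase i, y j := fun y => by simp [f, π]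
  have hf_single : f (Pi.single i 1) = 1 := by
    rw [hf, Pi.single_eq_same, Finset.sum_eq_zero fun j hj => Pi.single_eq_of_ne
      (Finset.ne_of_mem_erase hj) _, sub_zero]
  refine mem_extremePoints_of_isMaxOn_unique f (single_mem_eqInputParams i) (fun y hy => ?_)
    (fun y hy h => ?_)
  · rw [hf, hf_single]
    linarith [hle_one y hy, hrest_nonneg y hy]
  · rw [hf, hf_single] at h
    have hyi : y i = 1 := by linarith [hle_one y hy, hrest_nonneg y hy]
    have hzero := (Finset.sum_eq_zero_iff_of_nonneg fun j _ => hy.1 j).1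
      (by linarith : ∑ j ∈ Finset.univ.erase i, y j = 0)
    funext j
    rcases eq_or_ne j i with rfl | hji
    · simpa using hyi
    · simpa [hji] using hzero j (Finset.mem_erase.2 ⟨hji, Finset.mem_univ j⟩)

theorem eqInputParamVertices_subset_extremePoints (hd : 2 ≤ d) :
    eqInputParamVertices d ⊆ (eqInputParams d).extremePoints ℝ := by
  rintro _ (⟨i, rfl⟩ | rfl | rfl)
  · exact single_mem_extremePoints_eqInputParams hd i
  · exact zero_mem_extremePoints_eqInputParams
  · exact const_inv_mem_extremePoints_eqInputParams hd

theorem eqInputMarkov_eq_convexHull (hd : 2 ≤ d) :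
    eqInputMarkov d = convexHull ℝ (eqInputAffine d '' eqInputParamVertices d) := by
  rw [eqInputMarkov_eq_image, eqInputParams_eq_convexHull hd, AffineMap.image_convexHull]

theorem extremePoints_eqInputMarkov (hd : 2 ≤ d) :
    (eqInputMarkov d).extremePoints ℝ = eqInputAffine d '' eqInputParamVertices d := by
  refine (eqInputMarkov_eq_convexHull hd ▸ extremePoints_convexHull_subset).antisymm ?_
  rw [eqInputMarkov_eq_image]
  exact (image_mono (eqInputParamVertices_subset_extremePoints hd)).trans
    (AffineMap.image_extremePoints_subset (eqInputAffine_injective hd) _)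

theorem eqInputAffine_single (i : Fin d) :
    eqInputAffine d (Pi.single i 1) = eqRows d (Pi.single i 1) := by
  simp [eqInputAffine_apply, Finset.sum_pi_single']

theorem eqInputAffine_zero : eqInputAffine d 0 = 1 := by
  ext
  simp [eqInputAffine_apply, eqRows]

theorem eqInputAffine_const_inv (hd : 2 ≤ d) :
    eqInputAffine d (fun _ => ((d : ℝ) - 1)⁻¹) = ((d : ℝ) - 1)⁻¹ • (eqRows d (fun _ => 1) - 1) := by
  have hd' := (natCast_sub_one_pos hd).ne'
  ext a b
  simp only [eqInputAffine_apply, Finset.sum_const, Finset.card_univ, Fintype.card_fin,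
    nsmul_eq_mul, eqRows, Matrix.add_apply, Matrix.smul_apply, Matrix.sub_apply, Matrix.of_apply,
    Matrix.one_apply, smul_eq_mul]
  split_ifs
  · field_simp
    ring
  · ring

theorem image_eqInputParamVertices (hd : 2 ≤ d) :
    eqInputAffine d '' eqInputParamVertices d =
      (range fun i : Fin d => eqRows d (Pi.single i 1)) ∪
        {1, ((d : ℝ) - 1)⁻¹ • (eqRows d (fun _ => 1) - 1)} := by
  simp only [eqInputParamVertices, image_union, image_insert_eq, image_singleton, ← range_comp,
    comp_def, eqInputAffine_single, eqInputAffine_zero, eqInputAffine_const_inv hd]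

/-- for `d ≥ 2`, the set of equal-input Markov matrices is closed and convex,
and its extreme points are exactly the `d + 2` matrices `C_{e₁}, …, C_{e_d}`, `I`, and
`(1/(d−1))·(C_𝟙 − I)`. -/
theorem stmt3 (d : ℕ) (hd : 2 ≤ d) :
    IsClosed (eqInputMarkov d) ∧ Convex ℝ (eqInputMarkov d) ∧
      Set.extremePoints ℝ (eqInputMarkov d) =
        (Set.range fun i : Fin d => eqRows d (Pi.single i 1)) ∪
          {(1 : Matrix (Fin d) (Fin d) ℝ),
            ((d : ℝ) - 1)⁻¹ • (eqRows d (fun _ => 1) - 1)} := by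
  have hfin : (eqInputAffine d '' eqInputParamVertices d).Finite :=
    ((finite_range _).union (by simp)).image _
  rw [extremePoints_eqInputMarkov hd, eqInputMarkov_eq_convexHull hd]
  exact ⟨hfin.isClosed_convexHull ℝ, convex_convexHull ℝ _, image_eqInputParamVertices hd⟩
end

section
/- Let d ≥ 1, let x ∈ ℝ^d have summatory parameter x := x_1 + ⋯ + x_d ≠ 0, and let Q_x := −x·I + C_x. Then for every t ∈ ℝ, the matrix exponential satisfies exp(t·Q_x) = e^{−tx}·I + ((1 − e^{−tx})/x)·C_x. -/
/-!
With `x = ∑ᵢ xᵢ ≠ 0`, the matrix `P := x⁻¹ • C_x` is idempotent because `C_x * C_x = x • C_x`,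
and `Q_x = -x • (1 - P)`. For an idempotent `E` every power `Eⁿ` with `n ≥ 1` equals `E`, so the
exponential series collapses to `exp (a • E) = 1 + (eᵃ - 1) • E`; with `E = 1 - P` and `a = -t x`
this is the claimed formula.
-/

open Matrix

/-- The equal-input generator `Q_x := −x·I + C_x`, where `x = ∑ᵢ xᵢ`. -/
noncomputable def Qgen (d : ℕ) (x : Fin d → ℝ) : Matrix (Fin d) (Fin d) ℝ :=
  (-(∑ i, x i)) • (1 : Matrix (Fin d) (Fin d) ℝ) + eqRows d x

open NormedSpace Nat

theorem IsIdempotentElem.exp_smul {𝕂 𝔸 : Type*} [NontriviallyNormedField 𝕂] [CharZero 𝕂]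
    [ContinuousSMul ℚ 𝕂] [CompleteSpace 𝕂] [NormedRing 𝔸] [NormedAlgebra 𝕂 𝔸] [CompleteSpace 𝔸]
    {P : 𝔸} (hP : IsIdempotentElem P) (a : 𝕂) :
    exp (a • P) = 1 + (exp a - 1) • P := by
  have hterm : ∀ n : ℕ, ((n ! : 𝕂)⁻¹) • (a • P) ^ n
      = ((n ! : 𝕂)⁻¹ * a ^ n) • P + if n = 0 then 1 - P else 0 := by
    rintro (_ | n)
    · simp
    · rw [smul_pow, hP.pow_succ_eq, smul_smul, if_neg n.succ_ne_zero, add_zero]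
  have hsum : HasSum (fun n : ℕ => ((n ! : 𝕂)⁻¹) • (a • P) ^ n) (exp a • P + (1 - P)) := by
    simp only [hterm]
    exact ((exp_series_hasSum_exp' (𝕂 := 𝕂) a).smul_const P).add (hasSum_ite_eq 0 (1 - P))
  rw [(exp_series_hasSum_exp' (a • P)).unique hsum, sub_smul, one_smul]
  abel

theorem eqRows_mul_self (d : ℕ) (x : Fin d → ℝ) :
    eqRows d x * eqRows d x = (∑ i, x i) • eqRows d x := by
  ext i j
  simp [eqRows, Matrix.mul_apply, Finset.sum_mul]

theorem isIdempotentElem_inv_smul_eqRows (d : ℕ) (x : Fin d → ℝ) (hx : ∑ i, x i ≠ 0) :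
    IsIdempotentElem ((∑ i, x i)⁻¹ • eqRows d x) := by
  rw [IsIdempotentElem, smul_mul_smul, eqRows_mul_self, smul_smul, mul_assoc,
    inv_mul_cancel₀ hx, mul_one]

theorem Qgen_eq_neg_smul_one_sub (d : ℕ) (x : Fin d → ℝ) (hx : ∑ i, x i ≠ 0) :
    Qgen d x = (-(∑ i, x i)) • (1 - (∑ i, x i)⁻¹ • eqRows d x) := by
  rw [Qgen, smul_sub, smul_smul, neg_mul, mul_inv_cancel₀ hx]
  module

theorem stmt5_general (d : ℕ) (x : Fin d → ℝ) (hx : ∑ i, x i ≠ 0) (t : ℝ) :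
    NormedSpace.exp (t • Qgen d x) =
      Real.exp (-(t * ∑ i, x i)) • (1 : Matrix (Fin d) (Fin d) ℝ) +
        ((1 - Real.exp (-(t * ∑ i, x i))) / (∑ i, x i)) • eqRows d x := by
  -- `exp` does not depend on a norm; this one only makes the matrices a Banach algebra.
  let : NormedRing (Matrix (Fin d) (Fin d) ℝ) := Matrix.linftyOpNormedRing
  let : NormedAlgebra ℝ (Matrix (Fin d) (Fin d) ℝ) := Matrix.linftyOpNormedAlgebra
  have hP := isIdempotentElem_inv_smul_eqRows d x hx
  rw [Qgen_eq_neg_smul_one_sub d x hx, smul_smul, mul_neg]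
  refine (hP.one_sub.exp_smul _).trans ?_
  rw [← Real.exp_eq_exp_ℝ]
  module

/-- for `x` with nonzero summatory parameter `x = ∑ᵢ xᵢ` and any `t ∈ ℝ`,
`exp(t·Q_x) = e^{−tx}·I + ((1 − e^{−tx})/x)·C_x`. -/
theorem stmt5 (d : ℕ) (hd : 1 ≤ d) (x : Fin d → ℝ) (hx : ∑ i, x i ≠ 0) (t : ℝ) :
    NormedSpace.exp (t • Qgen d x) =
      Real.exp (-(t * ∑ i, x i)) • (1 : Matrix (Fin d) (Fin d) ℝ) +
        ((1 - Real.exp (-(t * ∑ i, x i))) / (∑ i, x i)) • eqRows d x :=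
  stmt5_general d x hx t
end

section
/- Let d ≥ 1 and let x, y ∈ ℝ^d with summatory parameters x = Σx_i and y = Σy_i. Define h : ℝ → ℝ by h(u) := (1 − e^{−u})/u for u ≠ 0 and h(0) := 1, and set z := (1/h(x+y))·( h(x)·e^{−y}·x + h(y)·y ) ∈ ℝ^d. Then exp(Q_x)·exp(Q_y) = exp(Q_z); that is, the product of the two matrix exponentials has the explicit equal-input logarithm Q_z = (1/h(x+y))·( h(x)·e^{−y}·Q_x + h(y)·Q_y ). -/
open Matrix

/-- `h(u) = (1 − e^{−u})/u` for `u ≠ 0`, with `h(0) = 1`. -/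
noncomputable def hfun (u : ℝ) : ℝ :=
  if u = 0 then 1 else (1 - Real.exp (-u)) / u

/-!
Equal-input generators multiply like scalars along one side: `Q_x * Q_y = (-y) • Q_x`. In
particular `Q_x² = (-x) • Q_x`, so the exponential series collapses to `exp Q_x = 1 + h(x) • Q_x`,
with `h` the sum of the series `∑ (-x)ⁿ / (n + 1)!`. Multiplying out,
`exp Q_x * exp Q_y = 1 + h(x) e^{-y} • Q_x + h(y) • Q_y`. The vector `z` is chosen so that
`h(x+y) • Q_z` is exactly the last two terms; since `∑ zᵢ = x + y` (from `u h(u) = 1 - e^{-u}`),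
also `exp Q_z = 1 + h(x+y) • Q_z`.
-/

lemma mul_hfun (u : ℝ) : u * hfun u = 1 - Real.exp (-u) := by
  unfold hfun
  split_ifs with hu
  · simp [hu]
  · field_simp

lemma hfun_pos (u : ℝ) : 0 < hfun u := by
  rcases lt_trichotomy u 0 with hu | rfl | hu
  · have h := mul_hfun u
    have : 1 < Real.exp (-u) := Real.one_lt_exp_iff.mpr (by linarith)
    nlinarith
  · simp [hfun]
  · have h := mul_hfun u
    have : Real.exp (-u) < 1 := Real.exp_lt_one_iff.mpr (by linarith)
    nlinarith

lemma hfun_add_mul_add (u v : ℝ) :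
    hfun u * Real.exp (-v) * u + hfun v * v = hfun (u + v) * (u + v) := by
  have hexp : Real.exp (-(u + v)) = Real.exp (-u) * Real.exp (-v) := by
    rw [neg_add, Real.exp_add]
  linear_combination Real.exp (-v) * mul_hfun u + mul_hfun v - mul_hfun (u + v) + hexp

lemma hasSum_neg_pow_div_factorial_succ (u : ℝ) :
    HasSum (fun n : ℕ => (-u) ^ n / ((n + 1).factorial : ℝ)) (hfun u) := by
  by_cases hu : u = 0
  · subst hu
    convert hasSum_ite_eq (0 : ℕ) (1 : ℝ) using 2 with n
    · rcases n with _ | n <;> simp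
    · simp [hfun]
  have hshift : HasSum (fun n : ℕ => (-u) ^ (n + 1) / ((n + 1).factorial : ℝ))
      (Real.exp (-u) - 1) := by
    simpa [Real.exp_eq_exp_ℝ] using
      (hasSum_nat_add_iff' 1).mpr (NormedSpace.expSeries_div_hasSum_exp (-u))
  have hval : hfun u = (-u)⁻¹ * (Real.exp (-u) - 1) := by
    unfold hfun
    rw [if_neg hu]
    field_simp
    ring
  have hterm (n : ℕ) : (-u)⁻¹ * ((-u) ^ (n + 1) / ((n + 1).factorial : ℝ)) =
      (-u) ^ n / ((n + 1).factorial : ℝ) := by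
    field_simp
    ring
  simpa only [hterm, ← hval] using hshift.mul_left (-u)⁻¹

section Algebra

variable {𝔸 : Type*} [NormedRing 𝔸] [NormedAlgebra ℝ 𝔸] [CompleteSpace 𝔸]

lemma exp_eq_one_add_hfun_smul {A : 𝔸} {a : ℝ} (hA : A * A = (-a) • A) :
    NormedSpace.exp A = 1 + hfun a • A := by
  have hpow : ∀ n : ℕ, A ^ (n + 1) = (-a) ^ n • A := by
    intro n
    induction n with
    | zero => simp
    | succ n ih => rw [pow_succ, ih, smul_mul_assoc, hA, smul_smul, pow_succ]
  have hshift : HasSum (fun n : ℕ => ((n + 1).factorial : ℝ)⁻¹ • A ^ (n + 1))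
      (NormedSpace.exp A - 1) := by
    simpa using (hasSum_nat_add_iff' 1).mpr (NormedSpace.exp_series_hasSum_exp' (𝕂 := ℝ) A)
  have hcollapse : HasSum (fun n : ℕ => ((n + 1).factorial : ℝ)⁻¹ • A ^ (n + 1))
      (hfun a • A) := by
    simp only [hpow, smul_smul]
    convert (hasSum_neg_pow_div_factorial_succ a).smul_const A using 3
    ring
  rw [← hshift.unique hcollapse, add_sub_cancel]

lemma exp_mul_exp_of_mul_eq_smul {A B : 𝔸} {a b : ℝ} (hA : A * A = (-a) • A)
    (hB : B * B = (-b) • B) (hAB : A * B = (-b) • A) :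
    NormedSpace.exp A * NormedSpace.exp B = 1 + (hfun a * Real.exp (-b)) • A + hfun b • B := by
  rw [exp_eq_one_add_hfun_smul hA, exp_eq_one_add_hfun_smul hB]
  have hcoef : hfun a * Real.exp (-b) = hfun a + hfun a * hfun b * (-b) := by
    linear_combination hfun a * mul_hfun b
  simp only [mul_add, add_mul, one_mul, mul_one, smul_mul_smul_comm, hAB, smul_smul, hcoef,
    add_smul]
  abel

end Algebra

lemma eqRows_mul_eqRows {d : ℕ} (x y : Fin d → ℝ) :
    eqRows d x * eqRows d y = (∑ i, x i) • eqRows d y := by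
  ext i j
  simp [eqRows, Matrix.mul_apply, Finset.sum_mul]

lemma Qgen_mul_Qgen {d : ℕ} (x y : Fin d → ℝ) :
    Qgen d x * Qgen d y = (-(∑ i, y i)) • Qgen d x := by
  simp only [Qgen, mul_add, add_mul, one_mul, mul_one, smul_mul_assoc, mul_smul_comm,
    eqRows_mul_eqRows]
  module

lemma Qgen_add {d : ℕ} (x y : Fin d → ℝ) : Qgen d (x + y) = Qgen d x + Qgen d y := by
  ext i j
  simp only [Qgen, eqRows, Pi.add_apply, Finset.sum_add_distrib, Matrix.add_apply,
    Matrix.smul_apply, Matrix.of_apply, smul_eq_mul]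
  ring

lemma Qgen_smul {d : ℕ} (c : ℝ) (x : Fin d → ℝ) : Qgen d (c • x) = c • Qgen d x := by
  ext i j
  simp only [Qgen, eqRows, Pi.smul_apply, smul_eq_mul, ← Finset.mul_sum, Matrix.add_apply,
    Matrix.smul_apply, Matrix.of_apply]
  ring

section MatrixExp

-- Any submultiplicative norm will do: all of them induce the product topology `exp` is taken in.
attribute [local instance] Matrix.linftyOpNormedRing Matrix.linftyOpNormedAlgebra

lemma exp_Qgen {d : ℕ} (x : Fin d → ℝ) :
    NormedSpace.exp (Qgen d x) = 1 + hfun (∑ i, x i) • Qgen d x := by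
  exact exp_eq_one_add_hfun_smul (Qgen_mul_Qgen x x)

lemma exp_Qgen_mul_exp_Qgen {d : ℕ} (x y : Fin d → ℝ) :
    NormedSpace.exp (Qgen d x) * NormedSpace.exp (Qgen d y) =
      1 + (hfun (∑ i, x i) * Real.exp (-(∑ i, y i))) • Qgen d x + hfun (∑ i, y i) • Qgen d y := by
  exact exp_mul_exp_of_mul_eq_smul (Qgen_mul_Qgen x x) (Qgen_mul_Qgen y y) (Qgen_mul_Qgen x y)

end MatrixExp

theorem stmt6_general (d : ℕ) (x y : Fin d → ℝ) :
    NormedSpace.exp (Qgen d x) * NormedSpace.exp (Qgen d y) =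
      NormedSpace.exp (Qgen d
        ((hfun ((∑ i, x i) + ∑ i, y i))⁻¹ •
          ((hfun (∑ i, x i) * Real.exp (-(∑ i, y i))) • x + hfun (∑ i, y i) • y))) ∧
    Qgen d ((hfun ((∑ i, x i) + ∑ i, y i))⁻¹ •
        ((hfun (∑ i, x i) * Real.exp (-(∑ i, y i))) • x + hfun (∑ i, y i) • y)) =
      (hfun ((∑ i, x i) + ∑ i, y i))⁻¹ •
        ((hfun (∑ i, x i) * Real.exp (-(∑ i, y i))) • Qgen d x +
          hfun (∑ i, y i) • Qgen d y) := by
  set sx := ∑ i, x i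
  set sy := ∑ i, y i
  set z : Fin d → ℝ := (hfun (sx + sy))⁻¹ • ((hfun sx * Real.exp (-sy)) • x + hfun sy • y)
  have hc : hfun (sx + sy) ≠ 0 := (hfun_pos _).ne'
  have hQz : Qgen d z =
      (hfun (sx + sy))⁻¹ • ((hfun sx * Real.exp (-sy)) • Qgen d x + hfun sy • Qgen d y) := by
    rw [Qgen_smul, Qgen_add, Qgen_smul, Qgen_smul]
  have hz : ∑ i, z i = sx + sy := by
    simp only [z, Pi.smul_apply, Pi.add_apply, smul_eq_mul, ← Finset.mul_sum,
      Finset.sum_add_distrib]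
    rw [hfun_add_mul_add, inv_mul_cancel_left₀ hc]
  refine ⟨?_, hQz⟩
  rw [exp_Qgen_mul_exp_Qgen, exp_Qgen, hz, hQz, smul_smul, mul_inv_cancel₀ hc, one_smul, add_assoc]

/-- with `z := (1/h(x+y))·(h(x)·e^{−y}·x + h(y)·y)`, one has
`exp(Q_x)·exp(Q_y) = exp(Q_z)`, and `Q_z` is the corresponding explicit linear combination
of `Q_x` and `Q_y` of equal-input type. -/
theorem stmt6 (d : ℕ) (hd : 1 ≤ d) (x y : Fin d → ℝ) :
    NormedSpace.exp (Qgen d x) * NormedSpace.exp (Qgen d y) =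
      NormedSpace.exp (Qgen d
        ((hfun ((∑ i, x i) + ∑ i, y i))⁻¹ •
          ((hfun (∑ i, x i) * Real.exp (-(∑ i, y i))) • x + hfun (∑ i, y i) • y))) ∧
    Qgen d ((hfun ((∑ i, x i) + ∑ i, y i))⁻¹ •
        ((hfun (∑ i, x i) * Real.exp (-(∑ i, y i))) • x + hfun (∑ i, y i) • y)) =
      (hfun ((∑ i, x i) + ∑ i, y i))⁻¹ •
        ((hfun (∑ i, x i) * Real.exp (-(∑ i, y i))) • Qgen d x +
          hfun (∑ i, y i) • Qgen d y) :=
  stmt6_general d x y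
end

section
/- Let d ≥ 1 and let q : ℝ → ℝ^d be continuous. Suppose M : ℝ → Mat(d,ℝ) satisfies M(0) = I and, for every t ≥ 0, M is differentiable at t with derivative M′(t) = M(t)·Q_{q(t)}. Then for every t ≥ 0 there exists y ∈ ℝ^d such that M(t) = (1 − y)·I + C_y with y = y_1 + ⋯ + y_d; in particular, every M(t) is of equal-input form with all row sums equal to 1. If moreover q(t) has all entries ≥ 0 for every t ≥ 0, then every M(t) is a Markov matrix, i.e., has all entries ≥ 0 and all row sums equal to 1. -/
open Matrix

/-!
Writing `a(t) = ∑ₖ qₖ(t)`, the entries of `M·Q_q` are `-a·Mᵢⱼ + rᵢ·qⱼ`, where `rᵢ` is the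
`i`-th row sum of `M`. Hence `rᵢ′ = 0`, so every row sum stays `1`, and every entry solves the
scalar linear equation `f′ = -a·f + qⱼ`. With `A′ = a`, `A(0) = 0`, the integrating factor `e^A`
shows that two entries of the same column differ by `e^{-A(t)}` times their initial difference,
so the off-diagonal entries of column `j` all equal `yⱼ := Mⱼⱼ - e^{-A(t)}`; and when `qⱼ ≥ 0`,
`e^A·Mᵢⱼ` is nondecreasing, so `Mᵢⱼ` stays nonnegative.
-/

open Real Set

section LinearODE

variable {a c f A : ℝ → ℝ}

lemma eq_of_hasDerivAt_zero_of_nonneg {g : ℝ → ℝ} (hg : ∀ t, 0 ≤ t → HasDerivAt g 0 t)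
    {t : ℝ} (ht : 0 ≤ t) : g t = g 0 :=
  constant_of_has_deriv_right_zero (fun x hx => (hg x hx.1).continuousAt.continuousWithinAt)
    (fun x hx => (hg x hx.1).hasDerivWithinAt) t ⟨ht, le_rfl⟩

lemma hasDerivAt_exp_mul_of_hasDerivAt_neg_mul_add {t : ℝ} (hA : HasDerivAt A (a t) t)
    (hf : HasDerivAt f (-a t * f t + c t) t) :
    HasDerivAt (fun s => exp (A s) * f s) (exp (A t) * c t) t :=
  (hA.exp.mul hf).congr_deriv (by ring)

lemma eq_exp_neg_mul_of_hasDerivAt_neg_mul (hA : ∀ t, 0 ≤ t → HasDerivAt A (a t) t)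
    (hA0 : A 0 = 0) (hf : ∀ t, 0 ≤ t → HasDerivAt f (-a t * f t) t) {t : ℝ} (ht : 0 ≤ t) :
    f t = exp (-A t) * f 0 := by
  have hconst : exp (A t) * f t = exp (A 0) * f 0 := by
    refine eq_of_hasDerivAt_zero_of_nonneg (g := fun s => exp (A s) * f s) (fun s hs => ?_) ht
    simpa using
      hasDerivAt_exp_mul_of_hasDerivAt_neg_mul_add (c := 0) (hA s hs) (by simpa using hf s hs)
  rw [hA0, exp_zero, one_mul] at hconst
  rw [← hconst, ← mul_assoc, ← exp_add, neg_add_cancel, exp_zero, one_mul]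

lemma nonneg_of_hasDerivAt_neg_mul_add (hA : ∀ t, 0 ≤ t → HasDerivAt A (a t) t)
    (hf : ∀ t, 0 ≤ t → HasDerivAt f (-a t * f t + c t) t) (hc : ∀ t, 0 ≤ t → 0 ≤ c t)
    (hf0 : 0 ≤ f 0) {t : ℝ} (ht : 0 ≤ t) : 0 ≤ f t := by
  have hderiv s (hs : 0 ≤ s) := hasDerivAt_exp_mul_of_hasDerivAt_neg_mul_add (hA s hs) (hf s hs)
  have hmono : MonotoneOn (fun s => exp (A s) * f s) (Ici 0) := by
    refine monotoneOn_of_hasDerivWithinAt_nonneg (convex_Ici 0)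
      (fun s hs => (hderiv s hs).continuousAt.continuousWithinAt)
      (fun s hs => (hderiv s (interior_subset hs)).hasDerivWithinAt)
      (fun s hs => mul_nonneg (exp_pos _).le (hc s (interior_subset hs)))
  have h0t : exp (A 0) * f 0 ≤ exp (A t) * f t := hmono (mem_Ici.2 le_rfl) ht ht
  exact nonneg_of_mul_nonneg_right ((mul_nonneg (exp_pos _).le hf0).trans h0t) (exp_pos _)

end LinearODE

lemma mul_Qgen_apply {d : ℕ} (x : Fin d → ℝ) (N : Matrix (Fin d) (Fin d) ℝ) (i j : Fin d) :
    (N * Qgen d x) i j = -(∑ k, x k) * N i j + (∑ k, N i k) * x j := by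
  rw [Qgen, Matrix.mul_add, Matrix.mul_smul, Matrix.mul_one]
  simp [Matrix.mul_apply, eqRows, Finset.sum_mul]

lemma eq_smul_one_add_eqRows {d : ℕ} {N : Matrix (Fin d) (Fin d) ℝ} {y : Fin d → ℝ}
    (hoff : ∀ i j, i ≠ j → N i j = y j) (hrow : ∀ i, ∑ j, N i j = 1) :
    N = (1 - ∑ j, y j) • (1 : Matrix (Fin d) (Fin d) ℝ) + eqRows d y := by
  ext i j
  rcases eq_or_ne i j with rfl | hij
  · have hsum : ∑ k, N i k = N i i - y i + ∑ k, y k := by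
      rw [← Finset.add_sum_erase _ _ (Finset.mem_univ i),
        ← Finset.add_sum_erase _ y (Finset.mem_univ i),
        Finset.sum_congr rfl fun k hk => hoff i k (Finset.ne_of_mem_erase hk).symm]
      ring
    simp only [Matrix.add_apply, Matrix.smul_apply, Matrix.one_apply_eq, smul_eq_mul, eqRows,
      Matrix.of_apply]
    linarith [hrow i]
  · simp [eqRows, Matrix.one_apply_ne hij, hoff i j hij]

section CauchyProblem

variable {d : ℕ} {q : ℝ → Fin d → ℝ} {M : ℝ → Matrix (Fin d) (Fin d) ℝ}

lemma rowSum_eq_one (hM0 : M 0 = 1)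
    (hM : ∀ t, 0 ≤ t → ∀ i j, HasDerivAt (fun s => M s i j) ((M t * Qgen d (q t)) i j) t)
    {t : ℝ} (ht : 0 ≤ t) (i : Fin d) : ∑ j, M t i j = 1 := by
  have hderiv s (hs : 0 ≤ s) : HasDerivAt (fun u => ∑ j, M u i j) 0 s := by
    have hsum : ∑ j, (M s * Qgen d (q s)) i j = 0 := by
      simp only [mul_Qgen_apply, Finset.sum_add_distrib, ← Finset.mul_sum]
      ring
    exact (HasDerivAt.fun_sum fun j _ => hM s hs i j).congr_deriv hsum
  rw [eq_of_hasDerivAt_zero_of_nonneg hderiv ht, hM0]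
  simp [Matrix.one_apply]

lemma hasDerivAt_entry (hM0 : M 0 = 1)
    (hM : ∀ t, 0 ≤ t → ∀ i j, HasDerivAt (fun s => M s i j) ((M t * Qgen d (q t)) i j) t)
    (t : ℝ) (ht : 0 ≤ t) (i j : Fin d) :
    HasDerivAt (fun s => M s i j) (-(∑ k, q t k) * M t i j + q t j) t := by
  simpa [mul_Qgen_apply, rowSum_eq_one hM0 hM ht] using hM t ht i j

end CauchyProblem

theorem stmt7_general (d : ℕ) (q : ℝ → Fin d → ℝ) (hq : Continuous q)
    (M : ℝ → Matrix (Fin d) (Fin d) ℝ) (hM0 : M 0 = 1)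
    (hM : ∀ t, 0 ≤ t → ∀ i j,
      HasDerivAt (fun s => M s i j) ((M t * Qgen d (q t)) i j) t) :
    (∀ t, 0 ≤ t → ∃ y : Fin d → ℝ,
        M t = (1 - ∑ i, y i) • (1 : Matrix (Fin d) (Fin d) ℝ) + eqRows d y) ∧
    ((∀ t, 0 ≤ t → ∀ i, 0 ≤ q t i) →
      ∀ t, 0 ≤ t → (∀ i j, 0 ≤ M t i j) ∧ (∀ i, ∑ j, M t i j = 1)) := by
  set A : ℝ → ℝ := fun u => ∫ s in (0 : ℝ)..u, ∑ k, q s k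
  have hA t (_ : 0 ≤ t) : HasDerivAt A (∑ k, q t k) t :=
    (continuous_finsetSum _ fun k _ => (continuous_apply k).comp hq).integral_hasStrictDerivAt
      0 t |>.hasDerivAt
  have hA0 : A 0 = 0 := intervalIntegral.integral_same
  have hent := hasDerivAt_entry hM0 hM
  refine ⟨fun t ht => ⟨fun j => M t j j - exp (-A t), ?_⟩, fun hq_nonneg t ht => ?_⟩
  · refine eq_smul_one_add_eqRows (fun i j hij => ?_) (rowSum_eq_one hM0 hM ht)
    have hdiff := eq_exp_neg_mul_of_hasDerivAt_neg_mul hA hA0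
      (f := fun s => M s i j - M s j j)
      (fun s hs => ((hent s hs i j).sub (hent s hs j j)).congr_deriv (by ring)) ht
    simp only [hM0, Matrix.one_apply_ne hij, one_apply_eq, zero_sub, mul_neg, mul_one] at hdiff
    linarith
  · refine ⟨fun i j => ?_, rowSum_eq_one hM0 hM ht⟩
    refine nonneg_of_hasDerivAt_neg_mul_add hA (fun s hs => hent s hs i j)
      (fun s hs => hq_nonneg s hs j) ?_ ht
    simp only [hM0, Matrix.one_apply]
    positivity

/-- if `M` solves the Cauchy problem `M′(t) = M(t)·Q_{q(t)}`, `M(0) = I`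
(entrywise derivative) for a continuous family `q(t) ∈ ℝ^d`, then every `M(t)` with `t ≥ 0`
is of equal-input form `(1 − y)·I + C_y` with `y = ∑ᵢ yᵢ` (in particular all row sums are `1`);
and if all `q(t) ≥ 0`, then every `M(t)` is a Markov matrix. -/
theorem stmt7 (d : ℕ) (hd : 1 ≤ d) (q : ℝ → Fin d → ℝ) (hq : Continuous q)
    (M : ℝ → Matrix (Fin d) (Fin d) ℝ) (hM0 : M 0 = 1)
    (hM : ∀ t, 0 ≤ t → ∀ i j,
      HasDerivAt (fun s => M s i j) ((M t * Qgen d (q t)) i j) t) :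
    (∀ t, 0 ≤ t → ∃ y : Fin d → ℝ,
        M t = (1 - ∑ i, y i) • (1 : Matrix (Fin d) (Fin d) ℝ) + eqRows d y) ∧
    ((∀ t, 0 ≤ t → ∀ i, 0 ≤ q t i) →
      ∀ t, 0 ≤ t → (∀ i j, 0 ≤ M t i j) ∧ (∀ i, ∑ j, M t i j = 1)) :=
  stmt7_general d q hq M hM0 hM
end

section
/- Let d ≥ 1 and let q : ℝ → ℝ^d be continuous with summatory parameter q(t) := q_1(t) + ⋯ + q_d(t), and let x(t) := exp(−∫₀ᵗ q(ρ)dρ) · ∫₀ᵗ q(τ)·exp(∫₀^τ q(σ)dσ) dτ. Then for every t ≥ 0 the summatory parameter of x(t) satisfies x(t) := x_1(t) + ⋯ + x_d(t) = 1 − exp(−∫₀ᵗ q(τ)dτ), hence x(t) < 1; consequently det((1 − x(t))·I + C_{x(t)}) = exp(−(d−1)·∫₀ᵗ q(τ)dτ) > 0 for all t ≥ 0. -/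
open Matrix

/-- The solution vector
`x(t) = exp(−∫₀ᵗ q(ρ)dρ) · ∫₀ᵗ q(τ)·exp(∫₀^τ q(σ)dσ) dτ`, where `q(t) = ∑ᵢ qᵢ(t)`. -/
noncomputable def xsol (d : ℕ) (q : ℝ → Fin d → ℝ) (t : ℝ) : Fin d → ℝ :=
  Real.exp (-∫ ρ in (0:ℝ)..t, ∑ i, q ρ i) •
    ∫ τ in (0:ℝ)..t, Real.exp (∫ σ in (0:ℝ)..τ, ∑ i, q σ i) • q τ

lemma det_smul_one_add_eqRows (d : ℕ) (hd : 1 ≤ d) (a : ℝ) (ha : a ≠ 0) (x : Fin d → ℝ) :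
    (a • (1 : Matrix (Fin d) (Fin d) ℝ) + eqRows d x).det
      = a ^ (d - 1) * (a + ∑ i, x i) := by
  have hC : eqRows d x = Matrix.replicateCol Unit (fun _ => (1:ℝ)) * Matrix.replicateRow Unit x := by
    ext i j; simp [eqRows, Matrix.mul_apply, Matrix.replicateCol, Matrix.replicateRow]
  have key : a • (1 : Matrix (Fin d) (Fin d) ℝ) + eqRows d x
      = a • ((1 : Matrix (Fin d) (Fin d) ℝ)
          + Matrix.replicateCol Unit (fun _ => (1:ℝ)) * Matrix.replicateRow Unit (a⁻¹ • x)) := by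
    rw [smul_add, hC]
    congr 1
    ext i j
    simp [Matrix.mul_apply, Matrix.replicateCol, Matrix.replicateRow]
    field_simp
  rw [key, Matrix.det_smul, Matrix.det_one_add_replicateCol_mul_replicateRow]
  have h1 : (a⁻¹ • x) ⬝ᵥ (fun _ => (1:ℝ)) = a⁻¹ * ∑ i, x i := by
    simp [dotProduct, Finset.mul_sum, smul_eq_mul]
  rw [h1]
  have h2 : a ^ Fintype.card (Fin d) = a ^ (d-1) * a := by
    rw [Fintype.card_fin, ← pow_succ]
    congr 1; omega
  rw [h2]
  field_simp

/-- for continuous `q` and `t ≥ 0`, the summatory parameter of `x(t)` equals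
`1 − exp(−∫₀ᵗ q(τ)dτ)`, hence is `< 1`; consequently
`det((1 − x(t))·I + C_{x(t)}) = exp(−(d−1)·∫₀ᵗ q(τ)dτ) > 0`. -/
theorem stmt9 (d : ℕ) (hd : 1 ≤ d) (q : ℝ → Fin d → ℝ) (hq : Continuous q)
    (t : ℝ) (ht : 0 ≤ t) :
    (∑ i, xsol d q t i) = 1 - Real.exp (-∫ τ in (0:ℝ)..t, ∑ i, q τ i) ∧
    (∑ i, xsol d q t i) < 1 ∧
    ((1 - ∑ i, xsol d q t i) • (1 : Matrix (Fin d) (Fin d) ℝ) + eqRows d (xsol d q t)).det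
      = Real.exp (-(((d : ℝ) - 1) * ∫ τ in (0:ℝ)..t, ∑ i, q τ i)) ∧
    0 < ((1 - ∑ i, xsol d q t i) • (1 : Matrix (Fin d) (Fin d) ℝ)
          + eqRows d (xsol d q t)).det := by
  set g : ℝ → ℝ := fun τ => ∑ i, q τ i with hg
  have hgc : Continuous g := continuous_finset_sum _ fun i _ => (continuous_apply i).comp hq
  set F : ℝ → ℝ := fun τ => ∫ σ in (0:ℝ)..τ, g σ with hF
  have hFd : ∀ τ, HasDerivAt F (g τ) τ := fun τ =>
    intervalIntegral.integral_hasDerivAt_right (hgc.intervalIntegrable 0 τ)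
      (hgc.stronglyMeasurableAtFilter _ _) hgc.continuousAt
  have hFc : Continuous F :=
    continuous_iff_continuousAt.2 fun τ => (hFd τ).differentiableAt.continuousAt
  have hintc : Continuous fun τ => Real.exp (F τ) • q τ :=
    (Real.continuous_exp.comp hFc).smul hq
  -- sum of the components of the vector integral
  have hsum : (∑ i, (∫ τ in (0:ℝ)..t, Real.exp (F τ) • q τ) i)
      = ∫ τ in (0:ℝ)..t, Real.exp (F τ) * g τ := by
    have hI : IntervalIntegrable (fun τ => Real.exp (F τ) • q τ)
        MeasureTheory.volume 0 t := hintc.intervalIntegrable 0 t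
    have h1 : ∀ i : Fin d, (∫ τ in (0:ℝ)..t, Real.exp (F τ) • q τ) i
        = ∫ τ in (0:ℝ)..t, Real.exp (F τ) * q τ i := fun i => by
      have := (ContinuousLinearMap.proj (R := ℝ) (φ := fun _ : Fin d => ℝ) i
        ).intervalIntegral_comp_comm hI
      simpa using this.symm
    simp_rw [h1]
    have h2 := intervalIntegral.integral_finset_sum (μ := MeasureTheory.volume)
      (a := (0:ℝ)) (b := t) (s := Finset.univ)
      (f := fun (i : Fin d) τ => Real.exp (F τ) * q τ i) (fun i _ =>
      ((Real.continuous_exp.comp hFc).mul ((continuous_apply i).comp hq)).intervalIntegrable 0 t)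
    rw [← h2]
    congr 1
    ext τ
    rw [← Finset.mul_sum]
  have hFTC : ∫ τ in (0:ℝ)..t, Real.exp (F τ) * g τ = Real.exp (F t) - 1 := by
    have hde : ∀ τ ∈ Set.uIcc (0:ℝ) t,
        HasDerivAt (fun u => Real.exp (F u)) (Real.exp (F τ) * g τ) τ := fun τ _ => (hFd τ).exp
    have := intervalIntegral.integral_eq_sub_of_hasDerivAt hde
      (((Real.continuous_exp.comp hFc).mul hgc).intervalIntegrable 0 t)
    simpa [hF, Real.exp_zero] using this
  have hxs : (∑ i, xsol d q t i) = 1 - Real.exp (-F t) := by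
    simp only [xsol, Pi.smul_apply, smul_eq_mul, ← Finset.mul_sum]
    rw [show (∫ ρ in (0:ℝ)..t, ∑ i, q ρ i) = F t from rfl]
    rw [show (∑ i, (∫ τ in (0:ℝ)..t, Real.exp (∫ σ in (0:ℝ)..τ, ∑ i, q σ i) • q τ) i)
        = ∑ i, (∫ τ in (0:ℝ)..t, Real.exp (F τ) • q τ) i from rfl]
    rw [hsum, hFTC, Real.exp_neg, mul_sub, inv_mul_cancel₀ (Real.exp_ne_zero _), mul_one]
  have hA : (∫ τ in (0:ℝ)..t, ∑ i, q τ i) = F t := rfl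
  have hlt : (∑ i, xsol d q t i) < 1 := by
    rw [hxs]; linarith [Real.exp_pos (-F t)]
  have hone : 1 - (∑ i, xsol d q t i) = Real.exp (-F t) := by rw [hxs]; ring
  have hdet : ((1 - ∑ i, xsol d q t i) • (1 : Matrix (Fin d) (Fin d) ℝ)
        + eqRows d (xsol d q t)).det = Real.exp (-F t) ^ (d - 1) := by
    rw [hone, det_smul_one_add_eqRows d hd _ (Real.exp_ne_zero _), hxs]
    ring
  refine ⟨by rw [hxs, hA], hlt, ?_, ?_⟩
  · rw [hdet, ← Real.exp_nat_mul, hA]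
    congr 1
    have : ((d - 1 : ℕ) : ℝ) = (d : ℝ) - 1 := by
      have : (1:ℕ) ≤ d := hd
      push_cast [Nat.cast_sub this]
      ring
    rw [this]; ring
  · rw [hdet]
    positivity
end

section
/- Let d ≥ 1, let Q₀ be a fixed real d×d matrix with all row sums zero, let μ : ℝ → ℝ be continuous, and let q : ℝ → ℝ^d be continuous with q_1(t) + ⋯ + q_d(t) = 0 for all t. Set u(t) := ∫₀ᵗ μ(τ)dτ, q^{(1)}(t) := ∫₀ᵗ q(τ)dτ and q^{(n+1)}(t) := ∫₀ᵗ μ(τ)·q^{(n)}(τ) dτ. Suppose M : ℝ → Mat(d,ℝ) satisfies M(0) = I and M′(t) = M(t)·(μ(t)·Q₀ + C_{q(t)}) for all t ≥ 0. Then for every t ≥ 0 the series Σ_{n≥1} C_{q^{(n)}(t)}·Q₀^{n−1} converges and M(t) = exp(u(t)·Q₀) + Σ_{n=1}^∞ C_{q^{(n)}(t)}·Q₀^{n−1}, where each summand C_{q^{(n)}(t)}·Q₀^{n−1} is an equal-rows matrix with zero trace; in particular M(t) − exp(u(t)·Q₀) is an equal-rows matrix with zero trace. -/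
open Matrix

/-!
Since `μ(t)·Q₀ + C_{q(t)}` has zero row sums, the rows of `M` keep sum one, hence
`M·C_{q} = C_{q}` and `M` solves the inhomogeneous linear equation `M′ = μ·M·Q₀ + C_q`.
The partial sums `exp(u·Q₀) + Σ_{n ≤ m} C_{q⁽ⁿ⁾}·Q₀^{n−1}` solve the same equation up to the
error `μ·C_{q⁽ᵐ⁾}·Q₀^m`, which is `O(xᵐ/m!)` on `[0, t]` by the iterated-integral bound
`‖q⁽ⁿ⁾(s)‖ ≤ K Bⁿ⁻¹ sⁿ/n!`; Gronwall's inequality then forces them to converge to `M(t)`.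
Zero-trace equal-rows matrices form a closed subspace, stable under right multiplication by
matrices with zero row sums, so it contains every summand and hence the sum.
-/

open Filter Topology Set Finset
open scoped Nat

section IteratedIntegral

variable {E : Type*} [NormedAddCommGroup E] [NormedSpace ℝ E] {μ : ℝ → ℝ} {f : ℝ → E}

/-- The paper's `q⁽ⁿ⁺¹⁾`, indexed from `0`. -/
noncomputable def iteratedIntegral (μ : ℝ → ℝ) (f : ℝ → E) : ℕ → ℝ → E
  | 0, t => ∫ τ in (0 : ℝ)..t, f τ
  | n + 1, t => ∫ τ in (0 : ℝ)..t, μ τ • iteratedIntegral μ f n τ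

theorem iteratedIntegral_at_zero : ∀ n, iteratedIntegral μ f n 0 = 0
  | 0 => intervalIntegral.integral_same
  | _ + 1 => intervalIntegral.integral_same

theorem continuous_iteratedIntegral (hμ : Continuous μ) (hf : Continuous f) :
    ∀ n, Continuous (iteratedIntegral μ f n)
  | 0 => intervalIntegral.continuous_primitive (fun a b => hf.intervalIntegrable a b) 0
  | n + 1 => intervalIntegral.continuous_primitive
      (fun a b => (hμ.smul (continuous_iteratedIntegral hμ hf n)).intervalIntegrable a b) 0

theorem norm_iteratedIntegral_le {K B t : ℝ} (hK : ∀ s ∈ Icc 0 t, ‖f s‖ ≤ K)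
    (hB : ∀ s ∈ Icc 0 t, |μ s| ≤ B) :
    ∀ n, ∀ s ∈ Icc 0 t, ‖iteratedIntegral μ f n s‖ ≤ K * B ^ n * s ^ (n + 1) / (n + 1)!
  | 0, s, hs => by
    have h := intervalIntegral.norm_integral_le_of_norm_le_const (a := 0) (b := s) (C := K)
      fun τ hτ => hK τ (Ioc_subset_Icc_self.trans (Icc_subset_Icc le_rfl hs.2)
        (uIoc_of_le hs.1 ▸ hτ))
    simpa [iteratedIntegral, abs_of_nonneg hs.1, mul_comm] using h
  | n + 1, s, hs => by
    have hsub : Icc 0 s ⊆ Icc 0 t := Icc_subset_Icc le_rfl hs.2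
    calc ‖iteratedIntegral μ f (n + 1) s‖
        ≤ ∫ τ in (0 : ℝ)..s, B * (K * B ^ n * τ ^ (n + 1) / (n + 1)!) := by
          have hbound : Continuous fun τ : ℝ => B * (K * B ^ n * τ ^ (n + 1) / (n + 1)!) := by
            fun_prop
          refine intervalIntegral.norm_integral_le_of_norm_le hs.1
            (MeasureTheory.ae_of_all _ fun τ hτ => ?_) (hbound.intervalIntegrable 0 s)
          have hτ' := hsub (Ioc_subset_Icc_self hτ)
          rw [norm_smul, Real.norm_eq_abs]
          exact mul_le_mul (hB τ hτ') (norm_iteratedIntegral_le hK hB n τ hτ') (norm_nonneg _)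
            ((abs_nonneg _).trans (hB τ hτ'))
      _ = K * B ^ (n + 1) * s ^ (n + 2) / (n + 2)! := by
          simp only [mul_div_assoc, intervalIntegral.integral_const_mul,
            intervalIntegral.integral_div, integral_pow, Nat.factorial_succ (n + 1)]
          push_cast
          field_simp
          ring

variable [CompleteSpace E]

theorem hasDerivAt_iteratedIntegral_zero (hf : Continuous f) (s : ℝ) :
    HasDerivAt (iteratedIntegral μ f 0) (f s) s :=
  (hf.integral_hasStrictDerivAt 0 s).hasDerivAt

theorem hasDerivAt_iteratedIntegral_succ (hμ : Continuous μ) (hf : Continuous f) (n : ℕ)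
    (s : ℝ) : HasDerivAt (iteratedIntegral μ f (n + 1)) (μ s • iteratedIntegral μ f n s) s :=
  ((hμ.smul (continuous_iteratedIntegral hμ hf n)).integral_hasStrictDerivAt 0 s).hasDerivAt

theorem ContinuousLinearMap.map_iteratedIntegral {F : Type*} [NormedAddCommGroup F]
    [NormedSpace ℝ F] [CompleteSpace F] (L : E →L[ℝ] F) (hμ : Continuous μ) (hf : Continuous f) :
    ∀ n t, L (iteratedIntegral μ f n t) = iteratedIntegral μ (fun s => L (f s)) n t
  | 0, t => (L.intervalIntegral_comp_comm (hf.intervalIntegrable 0 t)).symm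
  | n + 1, t => by
    calc L (∫ τ in (0 : ℝ)..t, μ τ • iteratedIntegral μ f n τ)
        = ∫ τ in (0 : ℝ)..t, L (μ τ • iteratedIntegral μ f n τ) :=
          (L.intervalIntegral_comp_comm
            ((hμ.smul (continuous_iteratedIntegral hμ hf n)).intervalIntegrable 0 t)).symm
      _ = iteratedIntegral μ (fun s => L (f s)) (n + 1) t := by
          simp_rw [map_smul, L.map_iteratedIntegral hμ hf n]
          rfl

end IteratedIntegral

theorem tendsto_zero_of_norm_deriv_le {E : Type*} [NormedAddCommGroup E] [NormedSpace ℝ E]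
    {Z Z' : ℕ → ℝ → E} {K t : ℝ} {ε : ℕ → ℝ} (ht : 0 ≤ t) (hε : Tendsto ε atTop (𝓝 0))
    (h0 : ∀ m, Z m 0 = 0) (hZ : ∀ m, ∀ s ∈ Icc 0 t, HasDerivAt (Z m) (Z' m s) s)
    (hZ' : ∀ m, ∀ s ∈ Ico 0 t, ‖Z' m s‖ ≤ K * ‖Z m s‖ + ε m) :
    Tendsto (fun m => Z m t) atTop (𝓝 0) := by
  have hbound : ∀ m, ‖Z m t‖ ≤ gronwallBound 0 K (ε m) t := fun m => by
    simpa using norm_le_gronwallBound_of_norm_deriv_right_le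
      (fun s hs => (hZ m s hs).continuousAt.continuousWithinAt)
      (fun s hs => (hZ m s (Ico_subset_Icc_self hs)).hasDerivWithinAt) (by simp [h0])
      (hZ' m) t ⟨ht, le_rfl⟩
  have hlim : Tendsto (fun m => gronwallBound 0 K (ε m) t) atTop (𝓝 0) := by
    simpa [Function.comp_def, gronwallBound_ε0_δ0] using
      ((gronwallBound_continuous_ε 0 K t).tendsto 0).comp hε
  exact squeeze_zero_norm hbound hlim

section BanachAlgebra

variable {𝔸 : Type*} [NormedRing 𝔸]

theorem norm_mul_pow_le (x a : 𝔸) : ∀ n, ‖x * a ^ n‖ ≤ ‖x‖ * ‖a‖ ^ n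
  | 0 => by simp
  | n + 1 => calc
      ‖x * a ^ (n + 1)‖ ≤ ‖x * a ^ n‖ * ‖a‖ := by rw [pow_succ, ← mul_assoc]; exact norm_mul_le _ _
      _ ≤ ‖x‖ * ‖a‖ ^ n * ‖a‖ := by gcongr; exact norm_mul_pow_le x a n
      _ = ‖x‖ * ‖a‖ ^ (n + 1) := by ring

variable [NormedAlgebra ℝ 𝔸]

theorem mul_eq_initial_mul_of_hasDerivAt {X A : ℝ → 𝔸} {p : 𝔸} {t : ℝ}
    (hX : ∀ s ∈ Icc 0 t, HasDerivAt X (X s * A s) s) (hp : ∀ s ∈ Icc 0 t, A s * p = 0) :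
    ∀ s ∈ Icc 0 t, X s * p = X 0 * p :=
  constant_of_has_deriv_right_zero
    (fun s hs => ((hX s hs).mul_const p).continuousAt.continuousWithinAt)
    fun s hs => by
      simpa [mul_assoc, hp s (Ico_subset_Icc_self hs)] using
        ((hX s (Ico_subset_Icc_self hs)).mul_const p).hasDerivWithinAt

variable {μ : ℝ → ℝ} {f : ℝ → 𝔸}

theorem norm_iteratedIntegral_mul_pow_le {K B t : ℝ} (hK : ∀ s ∈ Icc 0 t, ‖f s‖ ≤ K)
    (hB : ∀ s ∈ Icc 0 t, |μ s| ≤ B) (a : 𝔸) (n : ℕ) {s : ℝ} (hs : s ∈ Icc 0 t) :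
    ‖iteratedIntegral μ f n s * a ^ n‖ ≤ K * t * ((B * ‖a‖ * t) ^ n / n !) := by
  have hK0 : 0 ≤ K := (norm_nonneg _).trans (hK s hs)
  have hB0 : 0 ≤ B := (abs_nonneg _).trans (hB s hs)
  calc ‖iteratedIntegral μ f n s * a ^ n‖
      ≤ K * B ^ n * s ^ (n + 1) / (n + 1)! * ‖a‖ ^ n :=
        (norm_mul_pow_le _ _ n).trans (by gcongr; exact norm_iteratedIntegral_le hK hB n s hs)
    _ ≤ K * B ^ n * t ^ (n + 1) / n ! * ‖a‖ ^ n := by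
        gcongr
        · have := hs.1.trans hs.2
          positivity
        · exact hs.1
        · exact hs.2
        · omega
    _ = K * t * ((B * ‖a‖ * t) ^ n / n !) := by ring

variable [CompleteSpace 𝔸]

theorem hasDerivAt_exp_integral_smul (hμ : Continuous μ) (a : 𝔸) (s : ℝ) :
    HasDerivAt (fun s => NormedSpace.exp ((∫ τ in (0 : ℝ)..s, μ τ) • a))
      (μ s • (NormedSpace.exp ((∫ τ in (0 : ℝ)..s, μ τ) • a) * a)) s :=
  (hasDerivAt_exp_smul_const a _).scomp s (hμ.integral_hasStrictDerivAt 0 s).hasDerivAt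

theorem hasDerivAt_sum_iteratedIntegral_mul_pow (hμ : Continuous μ) (hf : Continuous f) (a : 𝔸)
    (s : ℝ) : ∀ m, HasDerivAt (fun s => ∑ k ∈ range (m + 1), iteratedIntegral μ f k s * a ^ k)
      (f s + μ s • ((∑ k ∈ range m, iteratedIntegral μ f k s * a ^ k) * a)) s
  | 0 => by simpa using hasDerivAt_iteratedIntegral_zero hf s
  | m + 1 => by
    simp_rw [sum_range_succ _ (m + 1)]
    refine ((hasDerivAt_sum_iteratedIntegral_mul_pow hμ hf a s m).add
      ((hasDerivAt_iteratedIntegral_succ hμ hf m s).mul_const (a ^ (m + 1)))).congr_deriv ?_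
    rw [sum_range_succ, add_mul, smul_add, ← add_assoc, pow_succ, smul_mul_assoc, mul_assoc]

theorem hasSum_iteratedIntegral_mul_pow {a : 𝔸} {X : ℝ → 𝔸} {t : ℝ} (hμ : Continuous μ)
    (hf : Continuous f) (ht : 0 ≤ t) (hX0 : X 0 = 1)
    (hX : ∀ s ∈ Icc 0 t, HasDerivAt X (μ s • (X s * a) + f s) s) :
    HasSum (fun n => iteratedIntegral μ f n t * a ^ n)
      (X t - NormedSpace.exp ((∫ τ in (0 : ℝ)..t, μ τ) • a)) := by
  set F := iteratedIntegral μ f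
  set E : ℝ → 𝔸 := fun s => NormedSpace.exp ((∫ τ in (0 : ℝ)..s, μ τ) • a)
  set P : ℕ → ℝ → 𝔸 := fun m s => ∑ k ∈ range m, F k s * a ^ k
  obtain ⟨K, hK⟩ := isCompact_Icc.exists_bound_of_continuousOn (hf.continuousOn (s := Icc 0 t))
  obtain ⟨B, hB⟩ := isCompact_Icc.exists_bound_of_continuousOn (hμ.continuousOn (s := Icc 0 t))
  have hB0 : 0 ≤ B := (norm_nonneg _).trans (hB 0 ⟨le_rfl, ht⟩)
  set c : ℕ → ℝ := fun n => K * t * ((B * ‖a‖ * t) ^ n / n !)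
  have hc : ∀ n, ∀ s ∈ Icc 0 t, ‖F n s * a ^ n‖ ≤ c n :=
    fun n s hs => norm_iteratedIntegral_mul_pow_le hK hB a n hs
  have hc_summable : Summable c := (Real.summable_pow_div_factorial _).mul_left (K * t)
  rw [hasSum_iff_tendsto_nat_of_summable_norm (hc_summable.of_nonneg_of_le
    (fun _ => norm_nonneg _) fun n => hc n t ⟨ht, le_rfl⟩), ← tendsto_add_atTop_iff_nat 1]
  -- `X - E - P (m + 1)` vanishes at `0` and solves `Z′ = μ • Z * a` up to `μ • F m * a ^ (m + 1)`
  have hZ := tendsto_zero_of_norm_deriv_le (Z := fun m s => X s - E s - P (m + 1) s)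
    (Z' := fun m s => μ s • ((X s - E s - P m s) * a)) (K := B * ‖a‖)
    (ε := fun m => B * ‖a‖ * c m) ht
    (by simpa using hc_summable.tendsto_atTop_zero.const_mul (B * ‖a‖))
    (fun m => by simp [E, P, F, hX0, iteratedIntegral_at_zero])
    (fun m s hs => (((hX s hs).sub (hasDerivAt_exp_integral_smul hμ a s)).sub
        (hasDerivAt_sum_iteratedIntegral_mul_pow hμ hf a s m)).congr_deriv (by
      simp only [E, F, P, sub_mul, smul_sub]
      abel))
    (fun m s hs => by
      have hsplit : X s - E s - P m s = X s - E s - P (m + 1) s + F m s * a ^ m := by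
        simp only [P, sum_range_succ]
        abel
      calc ‖μ s • ((X s - E s - P m s) * a)‖
          ≤ B * ((‖X s - E s - P (m + 1) s‖ + c m) * ‖a‖) := by
            rw [norm_smul, hsplit]
            gcongr
            · exact hB s (Ico_subset_Icc_self hs)
            · refine (norm_mul_le _ _).trans ?_
              gcongr
              exact (norm_add_le _ _).trans (add_le_add_right (hc m s (Ico_subset_Icc_self hs)) _)
        _ = B * ‖a‖ * ‖X s - E s - P (m + 1) s‖ + B * ‖a‖ * c m := by ring)
  simpa using (tendsto_const_nhds (x := X t - E t)).sub hZ

end BanachAlgebra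

theorem sum_intervalIntegral_apply {ι : Type*} [Fintype ι] {g : ℝ → ι → ℝ} (hg : Continuous g)
    (a b : ℝ) : ∑ i, (∫ s in a..b, g s) i = ∫ s in a..b, ∑ i, g s i := by
  let L : (ι → ℝ) →L[ℝ] ℝ := ∑ i, ContinuousLinearMap.proj i
  simpa [L] using (L.intervalIntegral_comp_comm (hg.intervalIntegrable a b)).symm

section EqRows

variable {d : ℕ}

theorem eqRows_mul (c : Fin d → ℝ) (A : Matrix (Fin d) (Fin d) ℝ) :
    eqRows d c * A = eqRows d (c ᵥ* A) := by
  ext i j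
  simp [eqRows, mul_apply, vecMul, dotProduct]

theorem eqRows_mulVec_one (c : Fin d → ℝ) : eqRows d c *ᵥ 1 = fun _ => ∑ j, c j := by
  ext i
  simp [eqRows, mulVec, dotProduct]

theorem mul_eqRows_eq_zero {A : Matrix (Fin d) (Fin d) ℝ} (hA : A *ᵥ 1 = 0) (c : Fin d → ℝ) :
    A * eqRows d c = 0 := by
  ext i j
  simpa [eqRows, mul_apply, mulVec, dotProduct, ← Finset.sum_mul] using
    congr_arg (· * c j) (congrFun hA i)

noncomputable def eqRowsCLM (d : ℕ) : (Fin d → ℝ) →L[ℝ] Matrix (Fin d) (Fin d) ℝ :=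
  LinearMap.toContinuousLinearMap
    { toFun := eqRows d
      map_add' := fun _ _ => rfl
      map_smul' := fun _ _ => rfl }

theorem eqRowsCLM_apply (c : Fin d → ℝ) : eqRowsCLM d c = eqRows d c := rfl

def zeroSumEqRows (d : ℕ) : Submodule ℝ (Matrix (Fin d) (Fin d) ℝ) where
  carrier := {A | ∃ c : Fin d → ℝ, ∑ i, c i = 0 ∧ A = eqRows d c}
  zero_mem' := ⟨0, by simp, rfl⟩
  add_mem' := by
    rintro _ _ ⟨c, hc, rfl⟩ ⟨c', hc', rfl⟩
    exact ⟨c + c', by simp [sum_add_distrib, hc, hc'], rfl⟩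
  smul_mem' := by
    rintro r _ ⟨c, hc, rfl⟩
    exact ⟨r • c, by simp [← mul_sum, hc], rfl⟩

theorem isClosed_zeroSumEqRows : IsClosed (zeroSumEqRows d : Set (Matrix (Fin d) (Fin d) ℝ)) :=
  Submodule.closed_of_finiteDimensional _

theorem eqRows_mul_mem_zeroSumEqRows (c : Fin d → ℝ) {A : Matrix (Fin d) (Fin d) ℝ}
    (hA : A *ᵥ 1 = 0) : eqRows d c * A ∈ zeroSumEqRows d :=
  ⟨c ᵥ* A, by rw [← dotProduct_one, ← dotProduct_mulVec, hA, dotProduct_zero], eqRows_mul c A⟩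

open scoped Matrix.Norms.Operator in
theorem hasSum_eqRows_iteratedIntegral_mul_pow {Q0 : Matrix (Fin d) (Fin d) ℝ}
    (hQ0 : Q0 *ᵥ 1 = 0) {μ : ℝ → ℝ} (hμ : Continuous μ) {q : ℝ → Fin d → ℝ} (hq : Continuous q)
    (hq0 : ∀ s, ∑ i, q s i = 0) {M : ℝ → Matrix (Fin d) (Fin d) ℝ} (hM0 : M 0 = 1) {t : ℝ}
    (ht : 0 ≤ t) (hM : ∀ s ∈ Icc 0 t, HasDerivAt M (M s * (μ s • Q0 + eqRows d (q s))) s) :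
    HasSum (fun n => eqRows d (iteratedIntegral μ q n t) * Q0 ^ n)
      (M t - NormedSpace.exp ((∫ τ in (0 : ℝ)..t, μ τ) • Q0)) := by
  have hA : ∀ s, (μ s • Q0 + eqRows d (q s)) *ᵥ 1 = 0 := fun s => by
    ext
    simp [add_mulVec, smul_mulVec, hQ0, eqRows_mulVec_one, hq0]
  -- rows of `M` keep sum `1`, so `M` acts trivially on equal-rows matrices
  have hM_eqRows : ∀ s ∈ Icc 0 t, ∀ c, M s * eqRows d c = eqRows d c := fun s hs c => by
    simpa [hM0] using
      mul_eq_initial_mul_of_hasDerivAt hM (fun s _ => mul_eqRows_eq_zero (hA s) c) s hs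
  have hX : ∀ s ∈ Icc 0 t, HasDerivAt M (μ s • (M s * Q0) + eqRowsCLM d (q s)) s := fun s hs =>
    (hM s hs).congr_deriv (by rw [mul_add, mul_smul_comm, hM_eqRows s hs, eqRowsCLM_apply])
  have h := hasSum_iteratedIntegral_mul_pow (f := fun s => eqRowsCLM d (q s)) hμ
    ((eqRowsCLM d).continuous.comp hq) ht hM0 hX
  have hterm : ∀ n, eqRows d (iteratedIntegral μ q n t) * Q0 ^ n =
      iteratedIntegral μ (fun s => eqRowsCLM d (q s)) n t * Q0 ^ n := fun n =>
    congrArg (· * Q0 ^ n) ((eqRowsCLM d).map_iteratedIntegral hμ hq n t)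
  simp_rw [hterm]
  exact h

end EqRows

theorem stmt14_general (d : ℕ) (Q0 : Matrix (Fin d) (Fin d) ℝ)
    (hQ0 : ∀ i, ∑ j, Q0 i j = 0)
    (μ : ℝ → ℝ) (hμ : Continuous μ)
    (q : ℝ → Fin d → ℝ) (hq : Continuous q) (hq0 : ∀ t, ∑ i, q t i = 0)
    (qit : ℕ → ℝ → Fin d → ℝ)
    (hq1 : ∀ t, qit 1 t = ∫ τ in (0:ℝ)..t, q τ)
    (hqrec : ∀ n, 1 ≤ n → ∀ t, qit (n + 1) t = ∫ τ in (0:ℝ)..t, μ τ • qit n τ)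
    (M : ℝ → Matrix (Fin d) (Fin d) ℝ) (hM0 : M 0 = 1)
    (hM : ∀ t, 0 ≤ t → ∀ i j,
      HasDerivAt (fun s => M s i j) ((M t * (μ t • Q0 + eqRows d (q t))) i j) t)
    (t : ℝ) (ht : 0 ≤ t) :
    ∃ S : Matrix (Fin d) (Fin d) ℝ,
      HasSum (fun n : ℕ => eqRows d (qit (n + 1) t) * Q0 ^ n) S ∧
      M t = NormedSpace.exp ((∫ τ in (0:ℝ)..t, μ τ) • Q0) + S ∧
      (∀ n : ℕ, ∃ c : Fin d → ℝ, (∑ i, c i) = 0 ∧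
        eqRows d (qit (n + 1) t) * Q0 ^ n = eqRows d c) ∧
      (∃ c : Fin d → ℝ, (∑ i, c i) = 0 ∧
        M t - NormedSpace.exp ((∫ τ in (0:ℝ)..t, μ τ) • Q0) = eqRows d c) := by
  have hQ0' : Q0 *ᵥ 1 = 0 := funext fun i => by simpa [mulVec, dotProduct] using hQ0 i
  have hqit : ∀ n, qit (n + 1) = iteratedIntegral μ q n := by
    intro n
    induction n with
    | zero => exact funext hq1
    | succ n ih => exact funext fun s => by rw [hqrec (n + 1) (by omega), ih]; rfl
  have hS := hasSum_eqRows_iteratedIntegral_mul_pow hQ0' hμ hq hq0 hM0 ht fun s hs =>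
    hasDerivAt_pi.2 fun i => hasDerivAt_pi.2 (hM s hs.1 i)
  simp_rw [← hqit] at hS
  have hmem : ∀ n, eqRows d (qit (n + 1) t) * Q0 ^ n ∈ zeroSumEqRows d := by
    rintro (_ | n)
    · refine ⟨qit 1 t, ?_, mul_one _⟩
      rw [hq1, sum_intervalIntegral_apply hq]
      simp [hq0]
    · exact eqRows_mul_mem_zeroSumEqRows _ (by rw [pow_succ, ← mulVec_mulVec, hQ0', mulVec_zero])
  exact ⟨_, hS, (add_sub_cancel _ _).symm, hmem, isClosed_zeroSumEqRows.mem_of_tendsto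
    hS.tendsto_sum_nat (Eventually.of_forall fun n => sum_mem fun k _ => hmem k)⟩

/-- for the Cauchy problem `M′(t) = M(t)·(μ(t)·Q₀ + C_{q(t)})`, `M(0) = I`,
with `Q₀` of zero row sums, `μ` continuous, and `q` continuous with entry sum zero, and the
iterated vectors `q⁽¹⁾(t) = ∫₀ᵗ q`, `q⁽ⁿ⁺¹⁾(t) = ∫₀ᵗ μ·q⁽ⁿ⁾`, the series
`Σ_{n≥1} C_{q⁽ⁿ⁾(t)}·Q₀^{n−1}` converges, and
`M(t) = exp(u(t)·Q₀) + Σ_{n≥1} C_{q⁽ⁿ⁾(t)}·Q₀^{n−1}`, where each summand — and hence the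
difference `M(t) − exp(u(t)·Q₀)` — is an equal-rows matrix with zero trace. -/
theorem stmt14 (d : ℕ) (hd : 1 ≤ d) (Q0 : Matrix (Fin d) (Fin d) ℝ)
    (hQ0 : ∀ i, ∑ j, Q0 i j = 0)
    (μ : ℝ → ℝ) (hμ : Continuous μ)
    (q : ℝ → Fin d → ℝ) (hq : Continuous q) (hq0 : ∀ t, ∑ i, q t i = 0)
    (qit : ℕ → ℝ → Fin d → ℝ)
    (hq1 : ∀ t, qit 1 t = ∫ τ in (0:ℝ)..t, q τ)
    (hqrec : ∀ n, 1 ≤ n → ∀ t, qit (n + 1) t = ∫ τ in (0:ℝ)..t, μ τ • qit n τ)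
    (M : ℝ → Matrix (Fin d) (Fin d) ℝ) (hM0 : M 0 = 1)
    (hM : ∀ t, 0 ≤ t → ∀ i j,
      HasDerivAt (fun s => M s i j) ((M t * (μ t • Q0 + eqRows d (q t))) i j) t)
    (t : ℝ) (ht : 0 ≤ t) :
    ∃ S : Matrix (Fin d) (Fin d) ℝ,
      HasSum (fun n : ℕ => eqRows d (qit (n + 1) t) * Q0 ^ n) S ∧
      M t = NormedSpace.exp ((∫ τ in (0:ℝ)..t, μ τ) • Q0) + S ∧
      (∀ n : ℕ, ∃ c : Fin d → ℝ, (∑ i, c i) = 0 ∧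
        eqRows d (qit (n + 1) t) * Q0 ^ n = eqRows d c) ∧
      (∃ c : Fin d → ℝ, (∑ i, c i) = 0 ∧
        M t - NormedSpace.exp ((∫ τ in (0:ℝ)..t, μ τ) • Q0) = eqRows d c) :=
  stmt14_general d Q0 hQ0 μ hμ q hq hq0 qit hq1 hqrec M hM0 hM t ht
end

section
/- Let d ≥ 1, let A be a real d×d matrix with all row sums zero, and let c ∈ ℝ^d with c_1 + ⋯ + c_d = 0. Then for every natural number n ≥ 1: (A + C_c)ⁿ = Aⁿ + C_c·A^{n−1}. -/
open Matrix

/-- for a zero-row-sum matrix `A` and a traceless equal-rows matrix `C_c`,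
`(A + C_c)ⁿ = Aⁿ + C_c·A^{n−1}` for all `n ≥ 1`. -/
theorem stmt15 (d : ℕ) (hd : 1 ≤ d) (A : Matrix (Fin d) (Fin d) ℝ)
    (hA : ∀ i, ∑ j, A i j = 0) (c : Fin d → ℝ) (hc : ∑ i, c i = 0)
    (n : ℕ) (hn : 1 ≤ n) :
    (A + eqRows d c) ^ n = A ^ n + eqRows d c * A ^ (n - 1) := by
  set B := eqRows d c with hB
  have hAB : A * B = 0 := by
    ext i j
    simp [hB, eqRows, Matrix.mul_apply, ← Finset.sum_mul, hA i]
  have hBB : B * B = 0 := by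
    ext i j
    simp [hB, eqRows, Matrix.mul_apply, ← Finset.sum_mul, hc]
  have hpow : ∀ k, A ^ (k + 1) * B = 0 := by
    intro k
    rw [pow_succ, mul_assoc, hAB, mul_zero]
  induction n with
  | zero => omega
  | succ m ih =>
    rcases Nat.eq_zero_or_pos m with hm | hm
    · subst hm; simp [pow_one]
    · have ih' := ih hm
      have hm1 : m - 1 + 1 = m := Nat.succ_pred_eq_of_pos hm
      have h1 : A ^ m * B = 0 := by
        rw [← hm1, hpow]
      have h3 : B * A ^ (m - 1) * B = 0 := by
        rcases Nat.eq_zero_or_pos (m - 1) with h | h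
        · rw [h]; simpa using hBB
        · rw [mul_assoc, ← Nat.succ_pred_eq_of_pos h, hpow, mul_zero]
      rw [pow_succ, ih', add_mul, mul_add, mul_add, ← pow_succ, h1, add_zero,
        mul_assoc, ← pow_succ, hm1, h3, add_zero]
      simp
end
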